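/- Let V be a ℚ-algebra and let π₀, π₁, …, πₙ be idempotents in V such that πᵢ·πⱼ = 0 whenever i < j. Define inductively πᵢ⁽⁰⁾ := πᵢ and πᵢ⁽ʳ⁺¹⁾ := (1 − ½πₙ⁽ʳ⁾)⋯(1 − ½π₍ᵢ₊₁₎⁽ʳ⁾) · πᵢ⁽ʳ⁾ · (1 − ½π₍ᵢ₋₁₎⁽ʳ⁾)⋯(1 − ½π₀⁽ʳ⁾). Then for every r ≥ 0 each πᵢ⁽ʳ⁾ is idempotent and πᵢ⁽ʳ⁾·πⱼ⁽ʳ⁾ = 0 whenever i ≠ j and i − j < r + 1. In particular, for every r ≥ n the idempotents π₀⁽ʳ⁾, …, πₙ⁽ʳ⁾ are mutually orthogonal, i.e. πᵢ⁽ʳ⁾·πⱼ⁽ʳ⁾ = 0 for all i ≠ j. -/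

import Mathlib

/-- One step of the non-commutative Gram–Schmidt process:
`gs n π i = (1 − ½πₙ)⋯(1 − ½π₍ᵢ₊₁₎) · πᵢ · (1 − ½π₍ᵢ₋₁₎)⋯(1 − ½π₀)`,
where the factors in each product are taken with decreasing index from left to right. -/
def gs {V : Type*} [Ring V] [Algebra ℚ V] (n : ℕ) (π : ℕ → V) (i : ℕ) : V :=
  (((List.range (n - i)).map (fun k => (1 : V) - ((2 : ℚ)⁻¹) • π (n - k))).prod)
    * π i *
  (((List.range i).map (fun k => (1 : V) - ((2 : ℚ)⁻¹) • π (i - 1 - k))).prod)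

/-- The `r`-th iterate of the non-commutative Gram–Schmidt process:
`πᵢ⁽⁰⁾ := πᵢ` and `πᵢ⁽ʳ⁺¹⁾ := (1 − ½πₙ⁽ʳ⁾)⋯(1 − ½π₍ᵢ₊₁₎⁽ʳ⁾)·πᵢ⁽ʳ⁾·(1 − ½π₍ᵢ₋₁₎⁽ʳ⁾)⋯(1 − ½π₀⁽ʳ⁾)`. -/
def gsIter {V : Type*} [Ring V] [Algebra ℚ V] (n : ℕ) (π : ℕ → V) : ℕ → ℕ → V
  | 0 => π
  | r + 1 => gs n (gsIter n π r)

/-!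
Write `gs n π i = Lᵢ πᵢ Rᵢ` with `Lᵢ = (1 − ½πₙ)⋯(1 − ½πᵢ₊₁)` and `Rᵢ = (1 − ½πᵢ₋₁)⋯(1 − ½π₀)`.
A factor `1 − ½πₖ` is absorbed by `x` on the right when `xπₖ = 0` and on the left when
`πₖx = 0`, so in `gsᵢ gsⱼ = Lᵢ (πᵢ Rᵢ Lⱼ πⱼ) Rⱼ` almost every factor of the middle term
disappears. For `i ≤ j` it collapses to `πᵢπⱼ`. For `j < i ≤ j + m + 1`, when orthogonality is
already known for index gaps up to `m`, it collapses to
`πᵢ(1 − ½πⱼ)(1 − ½πᵢ)πⱼ = (1 − ½ − ½)πᵢπⱼ = 0`.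
So each step keeps the idempotents and the relations `πᵢπⱼ = 0` for `i < j`, and widens the
range of orthogonality below the diagonal by one.
-/

section DescProd
variable {M : Type*} [Monoid M]

/-- `descProd f s t = f s * f (s - 1) * ⋯ * f (s - t + 1)`. -/
def descProd (f : ℕ → M) (s t : ℕ) : M :=
  ((List.range t).map fun k => f (s - k)).prod

variable (f : ℕ → M) (s : ℕ)

@[simp]
lemma descProd_zero : descProd f s 0 = 1 := rfl

lemma descProd_succ (t : ℕ) : descProd f s (t + 1) = descProd f s t * f (s - t) := by
  simp [descProd, List.range_succ]

lemma descProd_succ' (t : ℕ) : descProd f s (t + 1) = f s * descProd f (s - 1) t := by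
  simp only [descProd, List.range_succ_eq_map, List.map_cons, List.map_map, List.prod_cons,
    Nat.sub_zero, Function.comp_def, Nat.succ_eq_add_one, Nat.sub_sub, Nat.add_comm 1]

lemma descProd_add (t₁ t₂ : ℕ) :
    descProd f s (t₁ + t₂) = descProd f s t₁ * descProd f (s - t₁) t₂ := by
  induction t₂ with
  | zero => simp
  | succ t ih => rw [← Nat.add_assoc, descProd_succ, ih, descProd_succ, Nat.sub_sub, mul_assoc]

lemma descProd_sub_one_self_split {i j : ℕ} (hji : j < i) :
    descProd f (i - 1) i = descProd f (i - 1) (i - 1 - j) * f j * descProd f (j - 1) j := by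
  have h := descProd_add f (i - 1) (i - 1 - j) (j + 1)
  rw [show i - 1 - (i - 1 - j) = j by omega, show i - 1 - j + (j + 1) = i by omega,
    descProd_succ'] at h
  rw [h, mul_assoc]

lemma descProd_sub_split {n i j : ℕ} (hji : j < i) (hi : i ≤ n) :
    descProd f n (n - j) = descProd f n (n - i) * f i * descProd f (i - 1) (i - 1 - j) := by
  have h := descProd_add f n (n - i + 1) (i - 1 - j)
  rwa [descProd_succ, show n - (n - i) = i by omega, show n - (n - i + 1) = i - 1 by omega,
    show n - i + 1 + (i - 1 - j) = n - j by omega] at h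

variable {f s}

lemma mul_descProd_of_forall {x : M} {t : ℕ} (h : ∀ k < t, x * f (s - k) = x) :
    x * descProd f s t = x := by
  induction t with
  | zero => simp
  | succ t ih => rw [descProd_succ, ← mul_assoc, ih fun k hk => h k (by omega), h t (by omega)]

lemma descProd_mul_of_forall {x : M} {t : ℕ} (h : ∀ k < t, f (s - k) * x = x) :
    descProd f s t * x = x := by
  induction t with
  | zero => simp
  | succ t ih => rw [descProd_succ, mul_assoc, h t (by omega), ih fun k hk => h k (by omega)]

end DescProd

section OneSubSmul
variable {R V : Type*} [CommSemiring R] [Ring V] [Algebra R V] {x p : V} (c : R)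

lemma mul_one_sub_smul_of_mul_eq_zero (h : x * p = 0) : x * (1 - c • p) = x := by
  rw [mul_sub, mul_one, mul_smul_comm, h, smul_zero, sub_zero]

lemma one_sub_smul_mul_of_mul_eq_zero (h : p * x = 0) : (1 - c • p) * x = x := by
  rw [sub_mul, one_mul, smul_mul_assoc, h, smul_zero, sub_zero]

end OneSubSmul

lemma mul_one_sub_half_smul_mul_one_sub_half_smul_mul {V : Type*} [Ring V] [Algebra ℚ V]
    {x y : V} (hx : IsIdempotentElem x) (hy : IsIdempotentElem y) (hyx : y * x = 0) :
    x * (1 - (2 : ℚ)⁻¹ • y) * (1 - (2 : ℚ)⁻¹ • x) * y = 0 := by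
  have hxyy : x * (y * y) = x * y := by rw [hy.eq]
  simp only [mul_sub, sub_mul, mul_one, smul_mul_assoc, mul_smul_comm, mul_assoc, hx.eq, hxyy,
    hyx, mul_zero, smul_zero, sub_zero]
  module

/-- `πᵢπⱼ = 0` for distinct `i, j ≤ n` with `i ≤ j + m`; for `m = 0` these are the relations
`πᵢπⱼ = 0` for `i < j`. -/
def IsOrthogonalUpTo {V : Type*} [Mul V] [Zero V] (n m : ℕ) (π : ℕ → V) : Prop :=
  ∀ i j, i ≤ n → j ≤ n → i ≠ j → i ≤ j + m → π i * π j = 0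

lemma IsOrthogonalUpTo.mono {V : Type*} [Mul V] [Zero V] {n m m' : ℕ} {π : ℕ → V}
    (h : IsOrthogonalUpTo n m π) (hm : m' ≤ m) : IsOrthogonalUpTo n m' π :=
  fun i j hi hj hij hle => h i j hi hj hij (by omega)

section GramSchmidt
variable {V : Type*} [Ring V] [Algebra ℚ V] {n m : ℕ} {π : ℕ → V}

def gsFactor (π : ℕ → V) (k : ℕ) : V := 1 - (2 : ℚ)⁻¹ • π k

def gsLeft (n : ℕ) (π : ℕ → V) (i : ℕ) : V := descProd (gsFactor π) n (n - i)

def gsRight (π : ℕ → V) (i : ℕ) : V := descProd (gsFactor π) (i - 1) i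

lemma gs_eq_gsLeft_mul_mul_gsRight (n : ℕ) (π : ℕ → V) (i : ℕ) :
    gs n π i = gsLeft n π i * π i * gsRight π i := rfl

lemma mul_gsLeft_of_forall {x : V} {i : ℕ} (hx : ∀ k, i < k → k ≤ n → x * π k = 0) :
    x * gsLeft n π i = x :=
  mul_descProd_of_forall fun k hk =>
    mul_one_sub_smul_of_mul_eq_zero _ (hx (n - k) (by omega) (by omega))

lemma gsRight_mul_gsLeft_mul (h : IsOrthogonalUpTo n 0 π) {i j : ℕ} {y : V} (hij : i ≤ j)
    (hy : ∀ l < i, π l * y = 0) :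
    gsRight π i * (gsLeft n π j * y) = gsLeft n π j * y :=
  descProd_mul_of_forall fun k hk => one_sub_smul_mul_of_mul_eq_zero _ <| by
    rw [← mul_assoc,
      mul_gsLeft_of_forall fun l hl hln => h _ _ (by omega) hln (by omega) (by omega),
      hy _ (by omega)]

lemma mul_gsRight_mul_gsLeft_mul_of_le (h : IsOrthogonalUpTo n 0 π) {i j : ℕ} (hij : i ≤ j)
    (hj : j ≤ n) : π i * gsRight π i * gsLeft n π j * π j = π i * π j := by
  rw [mul_assoc, mul_assoc, gsRight_mul_gsLeft_mul h hij
      fun l hl => h l j (by omega) hj (by omega) (by omega),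
    ← mul_assoc, mul_gsLeft_of_forall fun k hk hkn => h i k (by omega) hkn (by omega) (by omega)]

lemma mul_gsRight_mul_gsLeft_mul_of_gt (hidem : ∀ k ≤ n, IsIdempotentElem (π k))
    (h : IsOrthogonalUpTo n m π) {i j : ℕ} (hji : j < i) (hi : i ≤ n) (hgap : i ≤ j + (m + 1)) :
    π i * gsRight π i * gsLeft n π j * π j = 0 := by
  set A := descProd (gsFactor π) (i - 1) (i - 1 - j)
  have hR : gsRight π i = A * gsFactor π j * gsRight π j := descProd_sub_one_self_split _ hji
  have hL : gsLeft n π j = gsLeft n π i * gsFactor π i * A := descProd_sub_split _ hji hi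
  have hiA : π i * A = π i := mul_descProd_of_forall fun k hk =>
    mul_one_sub_smul_of_mul_eq_zero _ (h i _ hi (by omega) (by omega) (by omega))
  have hAj : A * π j = π j := descProd_mul_of_forall fun k hk =>
    one_sub_smul_mul_of_mul_eq_zero _ (h _ j (by omega) (by omega) (by omega) (by omega))
  have hRL : gsRight π j * (gsLeft n π i * (gsFactor π i * π j)) =
      gsLeft n π i * (gsFactor π i * π j) :=
    gsRight_mul_gsLeft_mul (h.mono m.zero_le) hji.le fun l hl => by
      rw [gsFactor, ← mul_assoc,
        mul_one_sub_smul_of_mul_eq_zero _ (h l i (by omega) hi (by omega) (by omega)),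
        h l j (by omega) (by omega) (by omega) (by omega)]
  have hjL : π i * gsFactor π j * gsLeft n π i = π i * gsFactor π j :=
    mul_gsLeft_of_forall fun k hk hkn => by
      rw [gsFactor, mul_assoc,
        one_sub_smul_mul_of_mul_eq_zero _ (h j k (by omega) hkn (by omega) (by omega)),
        h i k hi hkn (by omega) (by omega)]
  calc π i * gsRight π i * gsLeft n π j * π j
      = π i * A * gsFactor π j * (gsRight π j * (gsLeft n π i * (gsFactor π i * (A * π j)))) := by
        rw [hR, hL]; simp only [mul_assoc]
    _ = π i * gsFactor π j * gsLeft n π i * gsFactor π i * π j := by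
        rw [hAj, hRL, hiA]; simp only [mul_assoc]
    _ = 0 := by
        rw [hjL]
        exact mul_one_sub_half_smul_mul_one_sub_half_smul_mul (hidem i hi) (hidem j (by omega))
          (h j i (by omega) hi hji.ne (by omega))

lemma gs_mul_gs (n : ℕ) (π : ℕ → V) (i j : ℕ) :
    gs n π i * gs n π j =
      gsLeft n π i * (π i * gsRight π i * gsLeft n π j * π j) * gsRight π j := by
  simp only [gs_eq_gsLeft_mul_mul_gsRight, mul_assoc]

lemma isIdempotentElem_gs (hidem : ∀ k ≤ n, IsIdempotentElem (π k))
    (h : IsOrthogonalUpTo n 0 π) {i : ℕ} (hi : i ≤ n) : IsIdempotentElem (gs n π i) := by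
  rw [IsIdempotentElem, gs_mul_gs, mul_gsRight_mul_gsLeft_mul_of_le h le_rfl hi, (hidem i hi).eq,
    gs_eq_gsLeft_mul_mul_gsRight]

lemma IsOrthogonalUpTo.gs (hidem : ∀ k ≤ n, IsIdempotentElem (π k))
    (h : IsOrthogonalUpTo n m π) : IsOrthogonalUpTo n (m + 1) (gs n π) := by
  intro i j hi hj hij hgap
  rw [gs_mul_gs]
  rcases lt_or_gt_of_ne hij with hlt | hgt
  · rw [mul_gsRight_mul_gsLeft_mul_of_le (h.mono m.zero_le) hlt.le hj,
      h i j hi hj hij (by omega), mul_zero, zero_mul]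
  · rw [mul_gsRight_mul_gsLeft_mul_of_gt hidem h hgt hi hgap, mul_zero, zero_mul]

end GramSchmidt

theorem stmt_1 {V : Type*} [Ring V] [Algebra ℚ V] (n : ℕ) (π : ℕ → V)
    (hidem : ∀ i, i ≤ n → π i * π i = π i)
    (horth : ∀ i j, i ≤ n → j ≤ n → i < j → π i * π j = 0) :
    (∀ r, ∀ i, i ≤ n → gsIter n π r i * gsIter n π r i = gsIter n π r i) ∧
    (∀ r : ℕ, ∀ i j, i ≤ n → j ≤ n → i ≠ j → (i : ℤ) - (j : ℤ) < (r : ℤ) + 1 →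
      gsIter n π r i * gsIter n π r j = 0) ∧
    (∀ r, n ≤ r → ∀ i j, i ≤ n → j ≤ n → i ≠ j →
      gsIter n π r i * gsIter n π r j = 0) := by
  have key : ∀ r, (∀ i ≤ n, IsIdempotentElem (gsIter n π r i)) ∧
      IsOrthogonalUpTo n r (gsIter n π r) := by
    intro r
    induction r with
    | zero => exact ⟨hidem, fun i j hi hj _ hle => horth i j hi hj (by omega)⟩
    | succ r ih =>
      exact ⟨fun i hi => isIdempotentElem_gs ih.1 (ih.2.mono r.zero_le) hi, ih.2.gs ih.1⟩
  exact ⟨fun r i hi => (key r).1 i hi,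
    fun r i j hi hj hij hgap => (key r).2 i j hi hj hij (by omega),
    fun r hr i j hi hj hij => (key r).2 i j hi hj hij (by omega)⟩
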